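/- arXiv:1209.3047 — 2 statements merged into one kernel-verified Lean document; each statement's English description precedes it below -/
import Mathlib

section
/- Let A be M×M Hermitian positive definite, B Hermitian positive semidefinite, and define φ(s) = tr(A (I_M + sA + B)^{-1}) for s > -λ_min, where λ_min is the smallest eigenvalue of A^{-1/2}(I_M + B)A^{-1/2}. Then φ is strictly decreasing on (-λ_min, ∞), φ(s) → +∞ as s → -λ_min⁺, and φ(s) → 0 as s → +∞; hence for every γ > 0 the equation γ = φ(s) has a unique solution s₀ ∈ (-λ_min, ∞). -/
/-!
With `R = A^{1/2}` one has `I + sA + B = R (s I + S) R` for the Hermitian matrix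
`S = R⁻¹ (I + B) R⁻¹`. Diagonalising `S`, with eigenvalues `μ i`, shows that `I + sA + B`
is positive definite iff `s + μ i > 0` for all `i`, so that `λ_min = min μ`, and that
`φ s = tr ((s I + S)⁻¹) = ∑ i, 1 / (s + μ i)`. All claims then follow from elementary
properties of this sum, the last one by the intermediate value theorem.
-/

open Matrix Filter Topology ComplexOrder

open Set in
theorem StrictAntiOn.existsUnique_eq_of_tendsto {f : ℝ → ℝ} {a L γ : ℝ}
    (hanti : StrictAntiOn f (Ioi a)) (hcont : ContinuousOn f (Ioi a))
    (hleft : Tendsto f (𝓝[>] a) atTop) (hright : Tendsto f atTop (𝓝 L)) (hγ : L < γ) :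
    ∃! s, s ∈ Ioi a ∧ f s = γ := by
  obtain ⟨b, hγb, hab⟩ := ((hleft.eventually_ge_atTop γ).and self_mem_nhdsWithin).exists
  obtain ⟨c, hcγ, hbc⟩ :=
    ((hright.eventually (gt_mem_nhds hγ)).and (eventually_ge_atTop b)).exists
  have hsub : Icc b c ⊆ Ioi a := fun x hx => lt_of_lt_of_le hab hx.1
  obtain ⟨s, hs, hfs⟩ := intermediate_value_Icc' hbc (hcont.mono hsub) ⟨hcγ.le, hγb⟩
  exact ⟨s, ⟨hsub hs, hfs⟩,
    fun t ⟨ht, hft⟩ => hanti.injOn ht (hsub hs) (hft.trans hfs.symm)⟩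

section SumInvAdd

open Set Finset

variable {ι : Type*} {μ : ι → ℝ} {i₀ : ι}

lemma forall_add_pos_iff_of_forall_le (hmin : ∀ i, μ i₀ ≤ μ i) (s : ℝ) :
    (∀ i, 0 < s + μ i) ↔ -μ i₀ < s :=
  ⟨fun h => by linarith [h i₀], fun hs i => by linarith [hmin i]⟩

lemma tendsto_sum_inv_add_atTop (t : Finset ι) :
    Tendsto (fun s => ∑ i ∈ t, (s + μ i)⁻¹) atTop (𝓝 0) := by
  simpa using tendsto_finsetSum t fun i _ =>
    tendsto_inv_atTop_zero.comp (tendsto_atTop_add_const_right _ (μ i) tendsto_id)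

variable [Fintype ι]

lemma strictAntiOn_sum_inv_add (hmin : ∀ i, μ i₀ ≤ μ i) :
    StrictAntiOn (fun s => ∑ i, (s + μ i)⁻¹) (Ioi (-μ i₀)) := fun a ha b _ hab =>
  sum_lt_sum_of_nonempty ⟨i₀, mem_univ _⟩ fun i _ =>
    inv_strictAnti₀ ((forall_add_pos_iff_of_forall_le hmin a).mpr ha i) (by linarith)

lemma continuousOn_sum_inv_add (hmin : ∀ i, μ i₀ ≤ μ i) :
    ContinuousOn (fun s => ∑ i, (s + μ i)⁻¹) (Ioi (-μ i₀)) :=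
  continuousOn_finsetSum _ fun i _ => (continuousOn_id.add continuousOn_const).inv₀
    fun s hs => ((forall_add_pos_iff_of_forall_le hmin s).mpr hs i).ne'

lemma tendsto_sum_inv_add_nhdsGT (hmin : ∀ i, μ i₀ ≤ μ i) :
    Tendsto (fun s => ∑ i, (s + μ i)⁻¹) (𝓝[>] (-μ i₀)) atTop := by
  have hshift : Tendsto (· + μ i₀) (𝓝[>] (-μ i₀)) (𝓝[>] 0) := by
    refine tendsto_nhdsWithin_iff.mpr ⟨?_, eventually_nhdsWithin_of_forall
      fun s (hs : -μ i₀ < s) => neg_lt_iff_pos_add.mp hs⟩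
    simpa using (continuous_add_const (μ i₀)).continuousWithinAt.tendsto
      (x := -μ i₀) (s := Ioi (-μ i₀))
  refine tendsto_atTop_mono' _ ?_ (tendsto_inv_nhdsGT_zero.comp hshift)
  filter_upwards [self_mem_nhdsWithin] with s hs
  exact single_le_sum (f := fun i => (s + μ i)⁻¹)
    (fun i _ => (inv_pos.mpr ((forall_add_pos_iff_of_forall_le hmin s).mpr hs i)).le)
    (mem_univ i₀)

end SumInvAdd

namespace Matrix

variable {n : Type*} [Fintype n] [DecidableEq n]

lemma inv_diagonal_of_ne_zero {K : Type*} [Field K] {d : n → K} (hd : ∀ i, d i ≠ 0) :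
    (diagonal d)⁻¹ = diagonal fun i => (d i)⁻¹ :=
  inv_eq_left_inv <| by simp [diagonal_mul_diagonal, hd]

lemma trace_inv_conjStarAlgAut (U : unitary (Matrix n n ℂ)) (X : Matrix n n ℂ) :
    (Unitary.conjStarAlgAut ℂ _ U X)⁻¹.trace = X⁻¹.trace := by
  rw [Unitary.conjStarAlgAut_apply, mul_inv_rev, mul_inv_rev, trace_mul_comm, mul_assoc,
    ← mul_inv_rev, Unitary.coe_star_mul_self, inv_one, mul_one]

namespace IsHermitian

variable {S : Matrix n n ℂ} (hS : S.IsHermitian)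

lemma smul_one_add_eq_conj_diagonal (s : ℝ) :
    (s : ℂ) • 1 + S = Unitary.conjStarAlgAut ℂ _ hS.eigenvectorUnitary
      (diagonal fun i => ((s + hS.eigenvalues i : ℝ) : ℂ)) := by
  conv_lhs => rw [hS.spectral_theorem]
  rw [← map_one (Unitary.conjStarAlgAut ℂ _ hS.eigenvectorUnitary), ← map_smul, ← map_add,
    smul_one_eq_diagonal, diagonal_add]
  congr 2
  ext i
  simp

lemma posDef_smul_one_add_iff (s : ℝ) :
    ((s : ℂ) • 1 + S).PosDef ↔ ∀ i, 0 < s + hS.eigenvalues i := by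
  rw [hS.smul_one_add_eq_conj_diagonal, Unitary.conjStarAlgAut_apply,
    Unitary.isUnit_coe.posDef_star_right_conjugate_iff, posDef_diagonal_iff]
  simp only [Complex.zero_lt_real]

lemma trace_inv_smul_one_add {s : ℝ} (hs : ∀ i, s + hS.eigenvalues i ≠ 0) :
    ((s : ℂ) • 1 + S)⁻¹.trace = ((∑ i, (s + hS.eigenvalues i)⁻¹ : ℝ) : ℂ) := by
  rw [hS.smul_one_add_eq_conj_diagonal, trace_inv_conjStarAlgAut,
    inv_diagonal_of_ne_zero (by exact_mod_cast hs), trace_diagonal]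
  push_cast
  rfl

end IsHermitian

open scoped MatrixOrder in
/-- The `μ i` are the eigenvalues of `A^{-1/2} C A^{-1/2}`. -/
theorem PosDef.exists_pencil_eigenvalues {A C : Matrix n n ℂ} (hA : A.PosDef)
    (hC : C.IsHermitian) :
    ∃ μ : n → ℝ, (∀ s : ℝ, (C + (s : ℂ) • A).PosDef ↔ ∀ i, 0 < s + μ i) ∧
      ∀ s : ℝ, (∀ i, s + μ i ≠ 0) →
        (A * (C + (s : ℂ) • A)⁻¹).trace = ((∑ i, (s + μ i)⁻¹ : ℝ) : ℂ) := by
  set R := CFC.sqrt A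
  have hR : R.PosDef := hA.isStrictlyPositive.sqrt.posDef
  have hRR : R * R = A := CFC.sqrt_mul_sqrt_self A hA.posSemidef.nonneg
  have hRRinv : R * R⁻¹ = 1 := mul_nonsing_inv R ((isUnit_iff_isUnit_det R).mp hR.isUnit)
  have hRinvR : R⁻¹ * R = 1 := nonsing_inv_mul R ((isUnit_iff_isUnit_det R).mp hR.isUnit)
  set S := R⁻¹ * C * R⁻¹
  have hS : S.IsHermitian := by
    simpa [S, hR.1.inv.eq] using isHermitian_conjTranspose_mul_mul R⁻¹ hC
  have hfactor (s : ℝ) : C + (s : ℂ) • A = star R * ((s : ℂ) • 1 + S) * R :=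
    calc C + (s : ℂ) • A = (R * R⁻¹) * C * (R⁻¹ * R) + (s : ℂ) • (R * R) := by
          rw [hRRinv, hRinvR, hRR, one_mul, mul_one]
      _ = star R * ((s : ℂ) • 1 + S) * R := by
          rw [hR.1.star_eq]; simp only [S]; noncomm_ring
  refine ⟨hS.eigenvalues, fun s => ?_, fun s hs => ?_⟩
  · rw [hfactor, hR.isUnit.posDef_star_left_conjugate_iff, hS.posDef_smul_one_add_iff]
  · rw [← hS.trace_inv_smul_one_add hs, hfactor, mul_inv_rev, mul_inv_rev, ← hRR, hR.1.star_eq,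
      mul_assoc R R, ← mul_assoc R R⁻¹, hRRinv, one_mul, trace_mul_comm, mul_assoc, hRinvR,
      mul_one]

end Matrix

open Set in
/-- For `A` Hermitian positive definite and `B` Hermitian positive semidefinite, with
`lm = λ_min(A^{-1/2}(I+B)A^{-1/2})` (characterized by: `I + sA + B` is positive definite
iff `s > -lm`), the map `φ(s) = tr(A (I + sA + B)⁻¹)` is strictly decreasing on
`(-lm, ∞)`, blows up as `s → -lm⁺`, vanishes as `s → ∞`, and hence for every `γ > 0`
the equation `γ = φ(s)` has a unique solution `s₀ ∈ (-lm, ∞)`. -/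
theorem stmt_7 (M : ℕ) (hM : 0 < M) (A B : Matrix (Fin M) (Fin M) ℂ)
    (hA : A.PosDef) (hB : B.PosSemidef)
    (lm : ℝ)
    (hlm : ∀ s : ℝ,
      ((1 : Matrix (Fin M) (Fin M) ℂ) + (s : ℂ) • A + B).PosDef ↔ -lm < s)
    (φ : ℝ → ℝ)
    (hφ : ∀ s : ℝ, φ s =
      (A * ((1 : Matrix (Fin M) (Fin M) ℂ) + (s : ℂ) • A + B)⁻¹).trace.re) :
    StrictAntiOn φ (Set.Ioi (-lm)) ∧
    Tendsto φ (𝓝[>] (-lm)) atTop ∧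
    Tendsto φ atTop (𝓝 0) ∧
    ∀ γ : ℝ, 0 < γ → ∃! s₀ : ℝ, s₀ ∈ Set.Ioi (-lm) ∧ φ s₀ = γ := by
  obtain ⟨μ, hpd, htr⟩ := hA.exists_pencil_eigenvalues (isHermitian_one.add hB.1)
  have hpencil (s : ℝ) : 1 + (s : ℂ) • A + B = 1 + B + (s : ℂ) • A := add_right_comm _ _ _
  have : Nonempty (Fin M) := Fin.pos_iff_nonempty.mp hM
  obtain ⟨i₀, hmin⟩ := Finite.exists_min μ
  obtain rfl : lm = μ i₀ := neg_inj.mp <| Ioi_inj.mp <| ext fun s => by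
    rw [mem_Ioi, mem_Ioi, ← hlm, hpencil, hpd, forall_add_pos_iff_of_forall_le hmin]
  have hφ_eq : EqOn (fun s => ∑ i, (s + μ i)⁻¹) φ (Ioi (-μ i₀)) := fun s hs => by
    rw [hφ, hpencil, htr s fun i => ((forall_add_pos_iff_of_forall_le hmin s).mpr hs i).ne',
      Complex.ofReal_re]
  have hanti := (strictAntiOn_sum_inv_add hmin).congr hφ_eq
  have hleft := (tendsto_sum_inv_add_nhdsGT hmin).congr' (eventuallyEq_nhdsWithin_of_eqOn hφ_eq)
  have hright :=
    (tendsto_sum_inv_add_atTop Finset.univ).congr' ((eventually_gt_atTop _).mono hφ_eq)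
  exact ⟨hanti, hleft, hright, fun γ hγ => hanti.existsUnique_eq_of_tendsto
    ((continuousOn_sum_inv_add hmin).congr hφ_eq.symm) hleft hright hγ⟩
end

section
/- For any a > 0 and any nonnegative random variable γ with density p, it holds that E[Q(√(aγ))] = (1/(2π)) ∫₀^∞ g((a(1+t))/2) / (√t (1+t)) dt, where g(s) = E[e^{-sγ}] is the Laplace transform of γ and Q(x) = ∫_x^∞ e^{-u²/2} du/√(2π). -/
/-!
Writing `1 / (1 + t) = ∫₀^∞ e^{-(1+t)s} ds` and swapping the integrals, the `Γ(1/2)` integral in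
`t` leaves `∫₀^∞ e^{-(c/2+s)} √π / √(c/2+s) ds`, which the substitution `c/2 + s = u²/2` turns
into `√(2π) ∫_{√c}^∞ e^{-u²/2} du`. Hence `2π Q(√c) = ∫₀^∞ e^{-c(1+t)/2} / (√t (1+t)) dt` for
`c > 0`. Taking `c = aγ`, averaging against `p` and swapping the integrals once more gives the
formula; the kernel is dominated by the integrable weight `1 / (√t (1+t))`.
-/

open MeasureTheory Real Set

theorem integral_mul_integral_swap {α β : Type*} [MeasurableSpace α] [MeasurableSpace β]
    {μ : Measure α} {ν : Measure β} [SFinite μ] [SFinite ν] {f : α → ℝ} {k : α → β → ℝ}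
    {w : β → ℝ} (hf : Integrable f μ) (hw : Integrable w ν)
    (hk : AEStronglyMeasurable (Function.uncurry k) (μ.prod ν))
    (hkw : ∀ᵐ z ∂μ.prod ν, ‖k z.1 z.2‖ ≤ w z.2) :
    ∫ x, f x * ∫ y, k x y ∂ν ∂μ = ∫ y, ∫ x, f x * k x y ∂μ ∂ν := by
  simp_rw [← integral_const_mul]
  refine integral_integral_swap ((hf.norm.mul_prod hw).mono' (hf.1.comp_fst.mul hk) ?_)
  filter_upwards [hkw] with z hz
  simp only [Function.uncurry, norm_mul]
  exact mul_le_mul_of_nonneg_left hz (norm_nonneg _)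

theorem ae_restrict_prod_restrict_mem {α β : Type*} [MeasurableSpace α] [MeasurableSpace β]
    {μ : Measure α} {ν : Measure β} [SFinite μ] [SFinite ν] {s : Set α} {t : Set β}
    (hs : MeasurableSet s) (ht : MeasurableSet t) :
    ∀ᵐ z ∂(μ.restrict s).prod (ν.restrict t), z ∈ s ×ˢ t := by
  rw [Measure.prod_restrict]
  exact ae_restrict_mem (hs.prod ht)

theorem integral_exp_neg_mul_Ioi {l : ℝ} (hl : 0 < l) :
    ∫ s in Ioi (0 : ℝ), exp (-(l * s)) = 1 / l := by
  simpa [neg_mul, neg_div_neg_eq] using integral_exp_mul_Ioi (neg_neg_of_pos hl) 0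

theorem integral_exp_neg_mul_div_sqrt {l : ℝ} (hl : 0 < l) :
    ∫ t in Ioi (0 : ℝ), exp (-(l * t)) / √t = √π / √l := by
  have h := integral_rpow_mul_exp_neg_mul_Ioi one_half_pos hl
  rw [Gamma_one_half_eq, ← sqrt_eq_rpow, sqrt_div' _ hl.le, sqrt_one] at h
  rw [div_eq_inv_mul, ← one_div, ← h]
  refine setIntegral_congr_fun measurableSet_Ioi fun t ht => ?_
  rw [show (1 : ℝ) / 2 - 1 = -(1 / 2) by norm_num, rpow_neg (le_of_lt ht), ← sqrt_eq_rpow,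
    div_eq_inv_mul]

theorem integrableOn_exp_neg_mul_div_sqrt {l : ℝ} (hl : 0 < l) :
    IntegrableOn (fun t => exp (-(l * t)) / √t) (Ioi 0) :=
  Integrable.of_integral_ne_zero <| by
    rw [integral_exp_neg_mul_div_sqrt hl]; positivity

theorem integrableOn_one_div_sqrt_mul_one_add :
    IntegrableOn (fun t : ℝ => 1 / (√t * (1 + t))) (Ioi 0) := by
  have hmeas : Measurable fun t : ℝ => 1 / (√t * (1 + t)) := by fun_prop
  rw [← Ioc_union_Ioi_eq_Ioi zero_le_one]
  refine IntegrableOn.union ?_ ?_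
  · have h : IntegrableOn (fun t : ℝ => t ^ (-(1 / 2) : ℝ)) (Ioc 0 1) :=
      (intervalIntegrable_iff_integrableOn_Ioc_of_le zero_le_one).1
        (intervalIntegral.intervalIntegrable_rpow' (by norm_num))
    refine h.mono' hmeas.aestronglyMeasurable.restrict ?_
    filter_upwards [ae_restrict_mem measurableSet_Ioc] with t ht
    obtain ⟨ht0, -⟩ := ht
    rw [rpow_neg ht0.le, ← sqrt_eq_rpow, norm_of_nonneg (by positivity), one_div]
    gcongr
    exact le_mul_of_one_le_right (sqrt_nonneg t) (by linarith)
  · have h : IntegrableOn (fun t : ℝ => t ^ (-(3 / 2) : ℝ)) (Ioi 1) :=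
      integrableOn_Ioi_rpow_of_lt (by norm_num) one_pos
    refine h.mono' hmeas.aestronglyMeasurable.restrict ?_
    filter_upwards [ae_restrict_mem measurableSet_Ioi] with t (ht : 1 < t)
    have ht0 : 0 < t := one_pos.trans ht
    rw [show (-(3 / 2) : ℝ) = -(1 / 2 + 1) by norm_num, rpow_neg ht0.le, rpow_add ht0, rpow_one,
      ← sqrt_eq_rpow, norm_of_nonneg (by positivity), one_div]
    gcongr
    linarith

theorem integral_exp_neg_add_mul_sqrt_pi_div_sqrt_add {c : ℝ} (hc : 0 < c) :
    ∫ s in Ioi (0 : ℝ), exp (-(c / 2 + s)) * (√π / √(c / 2 + s))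
      = √(2 * π) * ∫ u in Ioi √c, exp (-u ^ 2 / 2) := by
  have hsqrt : ∀ u ∈ Ioi √c, 0 < u := fun u hu => (sqrt_nonneg c).trans_lt hu
  have himage : (fun u => (u ^ 2 - c) / 2) '' Ioi √c = Ioi 0 := by
    ext s
    constructor
    · rintro ⟨u, hu, rfl⟩
      have : c < u ^ 2 := (sqrt_lt' (hsqrt u hu)).1 hu
      simp only [mem_Ioi]
      linarith
    · intro (hs : 0 < s)
      refine ⟨√(c + 2 * s), sqrt_lt_sqrt hc.le (by linarith), ?_⟩
      show (√(c + 2 * s) ^ 2 - c) / 2 = s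
      rw [sq_sqrt (by linarith)]
      ring
  have hderiv : ∀ u ∈ Ioi √c, HasDerivWithinAt (fun u => (u ^ 2 - c) / 2) u (Ioi √c) u := by
    intro u _
    simpa using (((hasDerivAt_pow 2 u).sub_const c).div_const 2).hasDerivWithinAt
  have hinj : InjOn (fun u => (u ^ 2 - c) / 2) (Ioi √c) := by
    intro u hu v hv huv
    exact (sq_eq_sq₀ (hsqrt u hu).le (hsqrt v hv).le).1 (by simpa using huv)
  rw [← himage, integral_image_eq_integral_abs_deriv_smul measurableSet_Ioi hderiv hinj,
    ← integral_const_mul]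
  refine setIntegral_congr_fun measurableSet_Ioi fun u hu => ?_
  have hu := hsqrt u hu
  rw [show c / 2 + (u ^ 2 - c) / 2 = u ^ 2 / 2 by ring, sqrt_div' _ zero_le_two, sqrt_sq hu.le,
    sqrt_mul zero_le_two, abs_of_pos hu, smul_eq_mul, show -(u ^ 2 / 2) = -u ^ 2 / 2 by ring]
  field_simp

theorem integral_exp_neg_mul_one_add_div_sqrt_mul_one_add {c : ℝ} (hc : 0 < c) :
    ∫ t in Ioi (0 : ℝ), exp (-(c * (1 + t) / 2)) / (√t * (1 + t))
      = √(2 * π) * ∫ u in Ioi √c, exp (-u ^ 2 / 2) := by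
  set A : ℝ → ℝ := fun t => exp (-(c * (1 + t) / 2)) / √t
  have hA : IntegrableOn A (Ioi 0) := by
    refine IntegrableOn.congr_fun
      ((integrableOn_exp_neg_mul_div_sqrt (half_pos hc)).const_mul (exp (-(c / 2))))
      (fun t _ => ?_) measurableSet_Ioi
    simp only [A, mul_div_assoc', ← exp_add]
    ring_nf
  have hbound : ∀ᵐ z ∂(volume.restrict (Ioi (0 : ℝ))).prod (volume.restrict (Ioi (0 : ℝ))),
      ‖exp (-((1 + z.1) * z.2))‖ ≤ exp (-z.2) := by
    filter_upwards [ae_restrict_prod_restrict_mem measurableSet_Ioi measurableSet_Ioi]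
      with ⟨t, s⟩ ⟨(ht : 0 < t), (hs : 0 < s)⟩
    rw [norm_of_nonneg (exp_pos _).le, exp_le_exp]
    nlinarith
  calc ∫ t in Ioi (0 : ℝ), exp (-(c * (1 + t) / 2)) / (√t * (1 + t))
      = ∫ t in Ioi (0 : ℝ), A t * ∫ s in Ioi (0 : ℝ), exp (-((1 + t) * s)) := by
        refine setIntegral_congr_fun measurableSet_Ioi fun t (ht : 0 < t) => ?_
        rw [integral_exp_neg_mul_Ioi (by linarith), mul_one_div, div_div]
    _ = ∫ s in Ioi (0 : ℝ), ∫ t in Ioi (0 : ℝ), A t * exp (-((1 + t) * s)) :=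
        integral_mul_integral_swap hA (integrableOn_exp_neg_Ioi 0) (by fun_prop) hbound
    _ = ∫ s in Ioi (0 : ℝ), exp (-(c / 2 + s)) * (√π / √(c / 2 + s)) := by
        refine setIntegral_congr_fun measurableSet_Ioi fun s (hs : 0 < s) => ?_
        have hsplit : ∀ t, A t * exp (-((1 + t) * s))
            = exp (-(c / 2 + s)) * (exp (-((c / 2 + s) * t)) / √t) := by
          intro t
          simp only [A, div_mul_eq_mul_div, mul_div_assoc', ← exp_add]
          ring_nf
        simp_rw [hsplit]
        rw [integral_const_mul, integral_exp_neg_mul_div_sqrt (by positivity)]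
    _ = √(2 * π) * ∫ u in Ioi √c, exp (-u ^ 2 / 2) :=
        integral_exp_neg_add_mul_sqrt_pi_div_sqrt_add hc

theorem integral_Ioi_sqrt_exp_neg_sq_div_sqrt_two_pi {c : ℝ} (hc : 0 < c) :
    ∫ u in Ioi √c, exp (-u ^ 2 / 2) / √(2 * π)
      = 1 / (2 * π) * ∫ t in Ioi (0 : ℝ), exp (-(c * (1 + t) / 2)) / (√t * (1 + t)) := by
  have hπ : √(2 * π) ^ 2 = 2 * π := sq_sqrt (by positivity)
  rw [integral_div, integral_exp_neg_mul_one_add_div_sqrt_mul_one_add hc]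
  field_simp
  rw [hπ]
  ring

theorem stmt_10_general (a : ℝ) (ha : 0 < a) (p : ℝ → ℝ)
    (hp_int : IntegrableOn p (Set.Ioi 0))
    (Q g : ℝ → ℝ)
    (hQ : ∀ x, Q x = ∫ u in Set.Ioi x, Real.exp (-u ^ 2 / 2) / Real.sqrt (2 * Real.pi))
    (hg : ∀ s, g s = ∫ γ in Set.Ioi (0 : ℝ), p γ * Real.exp (-s * γ)) :
    (∫ γ in Set.Ioi (0 : ℝ), p γ * Q (Real.sqrt (a * γ)))
      = (1 / (2 * Real.pi)) *
        ∫ t in Set.Ioi (0 : ℝ), g (a * (1 + t) / 2) / (Real.sqrt t * (1 + t)) := by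
  set k : ℝ → ℝ → ℝ := fun γ t => exp (-(a * (1 + t) / 2) * γ) / (√t * (1 + t))
  have hQk : ∀ γ ∈ Ioi (0 : ℝ), Q √(a * γ) = 1 / (2 * π) * ∫ t in Ioi (0 : ℝ), k γ t := by
    intro γ (hγ : 0 < γ)
    rw [hQ, integral_Ioi_sqrt_exp_neg_sq_div_sqrt_two_pi (by positivity)]
    congr 2 with t
    simp only [k]
    ring_nf
  have hbound : ∀ᵐ z ∂(volume.restrict (Ioi (0 : ℝ))).prod (volume.restrict (Ioi (0 : ℝ))),
      ‖k z.1 z.2‖ ≤ 1 / (√z.2 * (1 + z.2)) := by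
    filter_upwards [ae_restrict_prod_restrict_mem measurableSet_Ioi measurableSet_Ioi]
      with ⟨γ, t⟩ ⟨(hγ : 0 < γ), (ht : 0 < t)⟩
    have hexp : exp (-(a * (1 + t) / 2) * γ) ≤ 1 :=
      exp_le_one_iff.2 (by nlinarith [mul_pos (mul_pos ha (by linarith : 0 < 1 + t)) hγ])
    simp only [k, norm_div, norm_of_nonneg (exp_pos _).le,
      norm_of_nonneg (by positivity : 0 ≤ √t * (1 + t))]
    gcongr
  calc ∫ γ in Ioi (0 : ℝ), p γ * Q √(a * γ)
      = ∫ γ in Ioi (0 : ℝ), 1 / (2 * π) * (p γ * ∫ t in Ioi (0 : ℝ), k γ t) := by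
        refine setIntegral_congr_fun measurableSet_Ioi fun γ hγ => ?_
        rw [hQk γ hγ, mul_left_comm]
    _ = 1 / (2 * π) * ∫ t in Ioi (0 : ℝ), ∫ γ in Ioi (0 : ℝ), p γ * k γ t := by
        rw [integral_const_mul, integral_mul_integral_swap hp_int
          integrableOn_one_div_sqrt_mul_one_add (by fun_prop) hbound]
    _ = 1 / (2 * π) * ∫ t in Ioi (0 : ℝ), g (a * (1 + t) / 2) / (√t * (1 + t)) := by
        congr 1
        refine setIntegral_congr_fun measurableSet_Ioi fun t _ => ?_
        simp only [k, hg, ← integral_div, mul_div_assoc]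

/-- For a nonnegative random variable with density `p` on `(0,∞)` and Laplace transform
`g(s) = ∫ p(γ) e^{-sγ} dγ`, and `a > 0`,
`E[Q(√(aγ))] = (1/(2π)) ∫₀^∞ g(a(1+t)/2) / (√t (1+t)) dt`,
where `Q(x) = ∫ₓ^∞ e^{-u²/2} du/√(2π)` is the Gaussian tail function. -/
theorem stmt_10 (a : ℝ) (ha : 0 < a) (p : ℝ → ℝ)
    (hp_nonneg : ∀ x, 0 ≤ p x)
    (hp_int : IntegrableOn p (Set.Ioi 0))
    (hp_one : ∫ γ in Set.Ioi (0 : ℝ), p γ = 1)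
    (Q g : ℝ → ℝ)
    (hQ : ∀ x, Q x = ∫ u in Set.Ioi x, Real.exp (-u ^ 2 / 2) / Real.sqrt (2 * Real.pi))
    (hg : ∀ s, g s = ∫ γ in Set.Ioi (0 : ℝ), p γ * Real.exp (-s * γ))
    (hg_fin : ∀ s, 0 ≤ s → IntegrableOn (fun γ => p γ * Real.exp (-s * γ)) (Set.Ioi 0)) :
    (∫ γ in Set.Ioi (0 : ℝ), p γ * Q (Real.sqrt (a * γ)))
      = (1 / (2 * Real.pi)) *
        ∫ t in Set.Ioi (0 : ℝ), g (a * (1 + t) / 2) / (Real.sqrt t * (1 + t)) :=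
  stmt_10_general a ha p hp_int Q g hQ hg
end
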